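/- arXiv:1908.07350 — 4 statements merged into one kernel-verified Lean document; each statement's English description precedes it below -/
import Mathlib

section
/- Let f be a Schwarz function on the unit disk with Taylor expansion f(z) = ∑_{n≥1} c_n z^n. If |c_n| = 1 for some n ≥ 1, then f(z) = e^{iθ} z^n for some real θ. -/
/-!
On the circle of radius `r < 1`, `θ ↦ f (r e^{iθ}) = ∑ c_m r^m e^{imθ}` is an absolutely convergent
Fourier series, so Bessel's inequality in `L²` of the circle gives Gutzmer's inequality
`∑ |c_m|² r^{2m} ≤ sup |f|² ≤ 1`. Letting `r → 1`, `∑ |c_m|² ≤ 1`, so `|c_n| = 1` forces every other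
coefficient to vanish and `f z = c_n z^n` with `c_n = e^{iθ}`.
-/

open Metric MeasureTheory
open scoped Real InnerProductSpace

theorem Orthonormal.inner_eq_of_hasSum {ι 𝕜 E : Type*} [RCLike 𝕜] [NormedAddCommGroup E]
    [InnerProductSpace 𝕜 E] {v : ι → E} (hv : Orthonormal 𝕜 v) {a : ι → 𝕜} {x : E}
    (h : HasSum (fun i => a i • v i) x) (j : ι) : ⟪v j, x⟫_𝕜 = a j := by
  classical
  refine (h.mapL (innerSL 𝕜 (v j))).unique ?_
  convert hasSum_ite_eq j (a j) using 2 with i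
  rw [innerSL_apply_apply, inner_smul_right, orthonormal_iff_ite.mp hv]
  split_ifs <;> simp_all

theorem sum_sq_norm_le_sq_norm_of_hasSum_fourier {T : ℝ} [Fact (0 < T)] {ι : Type*}
    {k : ι → ℤ} (hk : Function.Injective k) {a : ι → ℂ} {g : C(AddCircle T, ℂ)}
    (h : HasSum (fun i => a i • fourier (k i)) g) (s : Finset ι) :
    ∑ i ∈ s, ‖a i‖ ^ 2 ≤ ‖g‖ ^ 2 := by
  set toL2 := ContinuousMap.toLp (E := ℂ) 2 (AddCircle.haarAddCircle (T := T)) ℂ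
  have hG : HasSum (fun i => a i • fourierLp (T := T) 2 (k i)) (toL2 g) := by
    simpa using toL2.hasSum h
  have hv : Orthonormal ℂ fun i => fourierLp (T := T) 2 (k i) :=
    (orthonormal_fourier (T := T)).comp k hk
  have hGg : ‖toL2 g‖ ≤ ‖g‖ := by
    refine (toL2.le_opNorm g).trans ?_
    have hunit : measureUnivNNReal (AddCircle.haarAddCircle (T := T)) = 1 := by
      simp [measureUnivNNReal]
    refine mul_le_of_le_one_left (norm_nonneg g) ?_
    simpa [hunit] using ContinuousMap.toLp_norm_le (E := ℂ) (p := 2) (𝕜 := ℂ)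
      (AddCircle.haarAddCircle (T := T))
  calc ∑ i ∈ s, ‖a i‖ ^ 2 = ∑ i ∈ s, ‖⟪fourierLp (T := T) 2 (k i), toL2 g⟫_ℂ‖ ^ 2 := by
        simp only [hv.inner_eq_of_hasSum hG]
    _ ≤ ‖toL2 g‖ ^ 2 := hv.sum_inner_products_le _
    _ ≤ ‖g‖ ^ 2 := by gcongr

theorem summable_norm_mul_pow_of_hasSum_on_ball {c : ℕ → ℂ} {f : ℂ → ℂ} {R r : ℝ}
    (hsum : ∀ z ∈ ball (0 : ℂ) R, HasSum (fun m => c m * z ^ m) (f z)) (hr : 0 ≤ r)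
    (hrR : r < R) : Summable fun m => ‖c m‖ * r ^ m := by
  obtain ⟨w, hrw, hwR⟩ := exists_between hrR
  have hw : (w : ℂ) ∈ ball (0 : ℂ) R := by
    rwa [mem_ball_zero_iff, Complex.norm_real, Real.norm_of_nonneg (hr.trans hrw.le)]
  have hrw' : ‖(r : ℂ)‖ < ‖(w : ℂ)‖ := by
    rwa [Complex.norm_real, Complex.norm_real, Real.norm_of_nonneg hr,
      Real.norm_of_nonneg (hr.trans hrw.le)]
  have := (summable_norm_iff (E := ℂ)).mpr
    (summable_powerSeries_of_norm_lt (hsum _ hw).tendsto_sum_nat.cauchySeq hrw')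
  simpa [norm_mul, abs_of_nonneg hr] using this

section

local instance : Fact (0 < 2 * π) := ⟨Real.two_pi_pos⟩

theorem sum_sq_norm_coeff_mul_pow_le {c : ℕ → ℂ} {f : ℂ → ℂ} {R M r : ℝ}
    (hsum : ∀ z ∈ ball (0 : ℂ) R, HasSum (fun m => c m * z ^ m) (f z))
    (hbd : ∀ z ∈ ball (0 : ℂ) R, ‖f z‖ ≤ M) (hr : 0 ≤ r) (hrR : r < R) (s : Finset ℕ) :
    ∑ m ∈ s, ‖c m‖ ^ 2 * r ^ (2 * m) ≤ M ^ 2 := by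
  have hball : ∀ x : AddCircle (2 * π), (r * AddCircle.toCircle x : ℂ) ∈ ball (0 : ℂ) R := by
    intro x
    simpa [abs_of_nonneg hr, Circle.norm_coe] using hrR
  have hM : 0 ≤ M := (norm_nonneg _).trans (hbd _ (hball 0))
  set a : ℕ → ℂ := fun m => c m * (r : ℂ) ^ m
  have hsumm : Summable fun m : ℕ => a m • fourier (T := 2 * π) m := by
    refine Summable.of_norm ?_
    simpa [a, norm_smul, fourier_norm, abs_of_nonneg hr] using
      summable_norm_mul_pow_of_hasSum_on_ball hsum hr hrR
  set g := ∑' m : ℕ, a m • fourier (T := 2 * π) m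
  have hg : ∀ x, g x = f (r * AddCircle.toCircle x) := by
    intro x
    refine ((ContinuousMap.evalCLM ℂ x).hasSum hsumm.hasSum).unique ?_
    convert hsum _ (hball x) using 2 with m
    simp only [map_smul, ContinuousMap.evalCLM_apply, fourier_apply, natCast_zsmul,
      AddCircle.toCircle_nsmul, Circle.coe_pow, smul_eq_mul, mul_pow, a]
    ring
  have hgM : ‖g‖ ≤ M := (g.norm_le hM).mpr fun x => hg x ▸ hbd _ (hball x)
  calc ∑ m ∈ s, ‖c m‖ ^ 2 * r ^ (2 * m) = ∑ m ∈ s, ‖a m‖ ^ 2 := by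
        refine Finset.sum_congr rfl fun m _ => ?_
        rw [norm_mul, norm_pow, Complex.norm_real, Real.norm_of_nonneg hr, mul_pow, ← pow_mul,
          mul_comm m 2]
    _ ≤ ‖g‖ ^ 2 := sum_sq_norm_le_sq_norm_of_hasSum_fourier Nat.cast_injective hsumm.hasSum s
    _ ≤ M ^ 2 := by gcongr

end

theorem sum_sq_norm_coeff_mul_radius_pow_le {c : ℕ → ℂ} {f : ℂ → ℂ} {R M : ℝ}
    (hsum : ∀ z ∈ ball (0 : ℂ) R, HasSum (fun m => c m * z ^ m) (f z))
    (hbd : ∀ z ∈ ball (0 : ℂ) R, ‖f z‖ ≤ M) (hR : 0 < R) (s : Finset ℕ) :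
    ∑ m ∈ s, ‖c m‖ ^ 2 * R ^ (2 * m) ≤ M ^ 2 := by
  have hcont : Continuous fun r : ℝ => ∑ m ∈ s, ‖c m‖ ^ 2 * r ^ (2 * m) := by fun_prop
  refine le_of_tendsto (hcont.continuousWithinAt (s := Set.Iio R)).tendsto ?_
  filter_upwards [Ioo_mem_nhdsLT hR] with r hr
  exact sum_sq_norm_coeff_mul_pow_le hsum hbd hr.1.le hr.2 s

theorem schwarz_coeff_eq_one_general (f : ℂ → ℂ) (c : ℕ → ℂ)
    (hsum : ∀ z ∈ ball (0 : ℂ) 1, HasSum (fun n : ℕ => c n * z ^ n) (f z))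
    (hbd : ∀ z ∈ ball (0 : ℂ) 1, ‖f z‖ < 1)
    (n : ℕ) (hcn : ‖c n‖ = 1) :
    ∃ θ : ℝ, ∀ z ∈ ball (0 : ℂ) 1, f z = Complex.exp (θ * Complex.I) * z ^ n := by
  have hzero : ∀ k ≠ n, c k = 0 := by
    intro k hk
    have h := sum_sq_norm_coeff_mul_radius_pow_le hsum (fun z hz => (hbd z hz).le) one_pos {k, n}
    rw [Finset.sum_pair hk, hcn] at h
    simpa using h
  have hmonomial : ∀ z ∈ ball (0 : ℂ) 1, f z = c n * z ^ n := fun z hz =>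
    (hsum z hz).unique (hasSum_single n fun k hk => by rw [hzero k hk, zero_mul])
  have hpolar : Complex.exp ((c n).arg * Complex.I) = c n := by
    simpa [hcn] using Complex.norm_mul_exp_arg_mul_I (c n)
  exact ⟨(c n).arg, fun z hz => by rw [hmonomial z hz, hpolar]⟩

/-- If a Schwarz function `f` on the unit disk has some Taylor coefficient of modulus one,
`‖c n‖ = 1` for some `n ≥ 1`, then `f z = exp (θ * I) * z ^ n` for some real `θ`. -/
theorem schwarz_coeff_eq_one (f : ℂ → ℂ) (c : ℕ → ℂ)
    (hd : DifferentiableOn ℂ f (ball (0 : ℂ) 1))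
    (hsum : ∀ z ∈ ball (0 : ℂ) 1, HasSum (fun n : ℕ => c n * z ^ n) (f z))
    (hf0 : f 0 = 0)
    (hbd : ∀ z ∈ ball (0 : ℂ) 1, ‖f z‖ < 1)
    (n : ℕ) (hn : 1 ≤ n) (hcn : ‖c n‖ = 1) :
    ∃ θ : ℝ, ∀ z ∈ ball (0 : ℂ) 1, f z = Complex.exp (θ * Complex.I) * z ^ n :=
  schwarz_coeff_eq_one_general f c hsum hbd n hcn
end

section
/- Under the hypotheses of the class H_Σ(τ,λ,δ;φ), comparing third coefficients gives ((1+2λ+6δ)/τ)a₃ = B₁c₂ + B₂c₁² and ((1+2λ+6δ)/τ)(2a₂² − a₃) = B₁d₂ + B₂d₁²; subtracting and using a₂ = B₁c₁τ/(1+λ+2δ) yields a₃ = B₁²c₁²τ²/(1+λ+2δ)² + B₁τ(c₂ − d₂)/(2(1+2λ+6δ)). -/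
/-!
Both sides of each subordination are power series on the unit disc. Differentiating term by
term, `(1-λ) f(z)/z + λ f'(z) + δ z f''(z)` has `n`-th coefficient `(1 + nλ + n(n+1)δ) a_{n+1}`;
since `a₁ = 1` the left-hand side then has constant term `1 = φ(u(0))`, so the identity extends
to `z = 0` as an identity of power series. The first two coefficients of `φ ∘ u` come from the
chain rule (Faà di Bruno in order two): `φ'(0) u'(0) = B₁ c₁` and
`(φ''(0) u'(0)² + φ'(0) u''(0)) / 2 = B₂ c₁² + B₁ c₂`. Applied to `f` and to `g = f⁻¹` (with
coefficients `-a₂` and `2a₂² - a₃`) this gives the relations; the two relations for `a₂` force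
`d₁ = -c₁`, and eliminating `a₂` gives `a₃`.
-/

open Metric FormalMultilinearSeries
open scoped NNReal

section PowerSeriesOnBall

variable {F : ℂ → ℂ} {e : ℕ → ℂ} {r : ℝ≥0}

theorem hasFPowerSeriesOnBall_ofScalars_of_hasSum (hr : 0 < r)
    (hF : ∀ z ∈ ball (0 : ℂ) r, HasSum (fun n ↦ e n * z ^ n) (F z)) :
    HasFPowerSeriesOnBall F (ofScalars ℂ e) 0 r where
  r_le := by
    refine ENNReal.le_of_forall_nnreal_lt fun s hs ↦ le_radius_of_summable _ ?_
    have hs' : (s : ℂ) ∈ ball (0 : ℂ) r := by simpa using hs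
    simpa [ofScalars_norm] using (hF _ hs').summable.norm
  r_pos := by simpa using hr
  hasSum {y} hy := by
    rw [eball_coe] at hy
    simpa [ofScalars_apply_eq, mul_comm] using hF y hy

theorem analyticOnNhd_of_hasSum (hr : 0 < r)
    (hF : ∀ z ∈ ball (0 : ℂ) r, HasSum (fun n ↦ e n * z ^ n) (F z)) :
    AnalyticOnNhd ℂ F (ball 0 r) := by
  simpa using (hasFPowerSeriesOnBall_ofScalars_of_hasSum hr hF).analyticOnNhd

theorem hasSum_mul_zero_pow (e : ℕ → ℂ) : HasSum (fun n ↦ e n * 0 ^ n) (e 0) := by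
  simpa using hasSum_single (f := fun n ↦ e n * (0 : ℂ) ^ n) 0 fun n hn ↦ by simp [hn]

theorem apply_zero_eq_of_hasSum (hr : 0 < r)
    (hF : ∀ z ∈ ball (0 : ℂ) r, HasSum (fun n ↦ e n * z ^ n) (F z)) : F 0 = e 0 :=
  (hF 0 (mem_ball_self (by exact_mod_cast hr))).unique (hasSum_mul_zero_pow e)

theorem iteratedDeriv_eq_factorial_mul_of_hasSum (hr : 0 < r)
    (hF : ∀ z ∈ ball (0 : ℂ) r, HasSum (fun n ↦ e n * z ^ n) (F z)) (n : ℕ) :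
    iteratedDeriv n F 0 = n.factorial * e n := by
  simpa [iteratedDeriv_eq_iteratedFDeriv, ofScalars_apply_eq] using
    ((hasFPowerSeriesOnBall_ofScalars_of_hasSum hr hF).factorial_smul 1 n).symm

theorem hasSum_deriv_of_hasSum (hr : 0 < r)
    (hF : ∀ z ∈ ball (0 : ℂ) r, HasSum (fun n ↦ e n * z ^ n) (F z)) :
    ∀ z ∈ ball (0 : ℂ) r, HasSum (fun n ↦ (n + 1) * e (n + 1) * z ^ n) (deriv F z) := by
  intro z hz
  have h := ((hasFPowerSeriesOnBall_ofScalars_of_hasSum hr hF).fderiv.hasSum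
    (by simpa using hz)).mapL (ContinuousLinearMap.apply ℂ ℂ (1 : ℂ))
  simpa [apply_eq_pow_smul_coeff, coeff_ofScalars, mul_comm, mul_left_comm] using h

theorem hasSum_div_self_of_hasSum
    (hF : ∀ z ∈ ball (0 : ℂ) r, HasSum (fun n ↦ e n * z ^ n) (F z)) (he : e 0 = 0)
    {z : ℂ} (hz : z ∈ ball (0 : ℂ) r) (hz0 : z ≠ 0) :
    HasSum (fun n ↦ e (n + 1) * z ^ n) (F z / z) := by
  have h := ((hasSum_nat_add_iff' 1).2 (hF z hz)).div_const z
  simpa only [Finset.range_one, Finset.sum_singleton, he, pow_zero, zero_mul, sub_zero, pow_succ,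
    ← mul_assoc, mul_div_cancel_right₀ _ hz0] using h

theorem hasSum_mul_deriv_of_hasSum (hr : 0 < r)
    (hF : ∀ z ∈ ball (0 : ℂ) r, HasSum (fun n ↦ e n * z ^ n) (F z))
    {z : ℂ} (hz : z ∈ ball (0 : ℂ) r) :
    HasSum (fun n ↦ n * e n * z ^ n) (z * deriv F z) := by
  have h := (hasSum_deriv_of_hasSum hr hF z hz).mul_left z
  rw [← hasSum_nat_add_iff' 1]
  simpa [pow_succ, mul_comm, mul_left_comm, mul_assoc] using h

end PowerSeriesOnBall

section Subordination

variable {r s : ℝ≥0} {φ u f : ℂ → ℂ} {a b c e : ℕ → ℂ}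

theorem coeff_comp_of_hasSum (hr : 0 < r) (hs : 0 < s)
    (hφ : ∀ w ∈ ball (0 : ℂ) r, HasSum (fun n ↦ b n * w ^ n) (φ w))
    (hu : ∀ z ∈ ball (0 : ℂ) s, HasSum (fun n ↦ c n * z ^ n) (u z)) (hc0 : c 0 = 0)
    (he : ∀ z ∈ ball (0 : ℂ) s, HasSum (fun n ↦ e n * z ^ n) (φ (u z))) :
    e 1 = b 1 * c 1 ∧ e 2 = b 1 * c 2 + b 2 * c 1 ^ 2 := by
  have hu0 : u 0 = 0 := (apply_zero_eq_of_hasSum hs hu).trans hc0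
  have hφa : AnalyticAt ℂ φ (u 0) := by
    rw [hu0]; exact analyticOnNhd_of_hasSum hr hφ 0 (mem_ball_self (by exact_mod_cast hr))
  have hua : AnalyticAt ℂ u 0 :=
    analyticOnNhd_of_hasSum hs hu 0 (mem_ball_self (by exact_mod_cast hs))
  have he' : ∀ z ∈ ball (0 : ℂ) s, HasSum (fun n ↦ e n * z ^ n) ((φ ∘ u) z) := he
  have h1 := deriv_comp 0 hφa.differentiableAt hua.differentiableAt
  have h2 := iteratedDeriv_comp_two hφa.contDiffAt hua.contDiffAt
  simp only [← iteratedDeriv_one, hu0, iteratedDeriv_eq_factorial_mul_of_hasSum hs he',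
    iteratedDeriv_eq_factorial_mul_of_hasSum hr hφ, iteratedDeriv_eq_factorial_mul_of_hasSum hs hu,
    Nat.factorial_one, Nat.factorial_two, Nat.cast_one, Nat.cast_ofNat, one_mul] at h1 h2
  exact ⟨h1, by linear_combination h2 / 2⟩

theorem hasSum_div_self_add_deriv_add_deriv_deriv (hr : 0 < r)
    (hf : ∀ z ∈ ball (0 : ℂ) r, HasSum (fun n ↦ a n * z ^ n) (f z)) (ha0 : a 0 = 0)
    (lam del : ℂ) {z : ℂ} (hz : z ∈ ball (0 : ℂ) r) (hz0 : z ≠ 0) :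
    HasSum (fun n ↦ (1 + n * lam + n * (n + 1) * del) * a (n + 1) * z ^ n)
      ((1 - lam) * (f z / z) + lam * deriv f z + del * z * deriv (deriv f) z) := by
  have h1 := hasSum_div_self_of_hasSum hf ha0 hz hz0
  have h2 := hasSum_deriv_of_hasSum hr hf z hz
  have h3 := hasSum_mul_deriv_of_hasSum hr (hasSum_deriv_of_hasSum hr hf) hz
  rw [mul_assoc del z]
  exact (((h1.mul_left (1 - lam)).add (h2.mul_left lam)).add (h3.mul_left del)).congr_fun
    fun n ↦ by ring

theorem coeff_relations_of_subordinate (hr : 0 < r) (hs : 0 < s)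
    (hφ : ∀ w ∈ ball (0 : ℂ) r, HasSum (fun n ↦ b n * w ^ n) (φ w)) (hb0 : b 0 = 1)
    (hf : ∀ z ∈ ball (0 : ℂ) s, HasSum (fun n ↦ a n * z ^ n) (f z)) (ha0 : a 0 = 0)
    (ha1 : a 1 = 1)
    (hu : ∀ z ∈ ball (0 : ℂ) s, HasSum (fun n ↦ c n * z ^ n) (u z)) (hc0 : c 0 = 0)
    {lam del τ : ℂ}
    (hsub : ∀ z ∈ ball (0 : ℂ) s, z ≠ 0 →
      1 + (1 / τ) * ((1 - lam) * (f z / z) + lam * deriv f z + del * z * deriv (deriv f) z - 1)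
        = φ (u z)) :
    (1 + lam + 2 * del) / τ * a 2 = b 1 * c 1 ∧
      (1 + 2 * lam + 6 * del) / τ * a 3 = b 1 * c 2 + b 2 * c 1 ^ 2 := by
  set e : ℕ → ℂ := fun n ↦
    (1 + n * lam + n * (n + 1) * del) * a (n + 1) / τ + if n = 0 then 1 - 1 / τ else 0
  have he : ∀ z ∈ ball (0 : ℂ) s, HasSum (fun n ↦ e n * z ^ n) (φ (u z)) := by
    intro z hz
    rcases eq_or_ne z 0 with rfl | hz0
    -- `hsub` is silent at `z = 0`, where `f z / z` is junk; both sides equal `1` there.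
    · rw [apply_zero_eq_of_hasSum hs hu, hc0, apply_zero_eq_of_hasSum hr hφ, hb0]
      simpa [e, ha1] using hasSum_mul_zero_pow e
    · have hL := hasSum_div_self_add_deriv_add_deriv_deriv hs hf ha0 lam del hz hz0
      rw [← hsub z hz hz0, show ∀ L : ℂ, 1 + 1 / τ * (L - 1) = L / τ + (1 - 1 / τ) by
        intro L; ring]
      refine ((hL.div_const τ).add (hasSum_ite_eq 0 (1 - 1 / τ))).congr_fun fun n ↦ ?_
      rcases n with _ | n <;> simp [e]; ring
  obtain ⟨h1, h2⟩ := coeff_comp_of_hasSum hr hs hφ hu hc0 he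
  simp only [e] at h1 h2
  constructor
  · rw [← h1]; push_cast; ring
  · rw [← h2]; push_cast; ring

end Subordination

theorem third_coeff_eq_of_relations {K : Type*} [Field K] [NeZero (2 : K)]
    {P Q τ B₁ B₂ a₂ a₃ c₁ c₂ d₁ d₂ : K} (hP : P ≠ 0) (hQ : Q ≠ 0) (hτ : τ ≠ 0)
    (ha₂ : P / τ * a₂ = B₁ * c₁) (ha₃ : Q / τ * a₃ = B₁ * c₂ + B₂ * c₁ ^ 2)
    (ha₃' : Q / τ * (2 * a₂ ^ 2 - a₃) = B₁ * d₂ + B₂ * d₁ ^ 2) (hd₁ : d₁ ^ 2 = c₁ ^ 2) :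
    a₃ = B₁ ^ 2 * c₁ ^ 2 * τ ^ 2 / P ^ 2 + B₁ * τ * (c₂ - d₂) / (2 * Q) := by
  have ha₂' : a₂ = B₁ * c₁ * τ / P := by field_simp at ha₂ ⊢; linear_combination ha₂
  field_simp at ha₃ ha₃' ⊢
  rw [ha₂'] at ha₃'
  field_simp at ha₃'
  linear_combination P ^ 2 * ha₃ - ha₃' - τ * P ^ 2 * B₂ * hd₁

theorem third_coefficient_relations_general (f g u v φf : ℂ → ℂ) (a A c d : ℕ → ℂ) (B : ℕ → ℝ) (lam del : ℝ) (τ : ℂ)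
    (hlam : 1 ≤ lam) (hdel0 : 0 ≤ del) (hτ : τ ≠ 0)
    (hB0 : B 0 = 1) (hB1 : 0 < B 1)
    (hfs : ∀ z ∈ ball (0 : ℂ) 1, HasSum (fun n : ℕ => a n * z ^ n) (f z))
    (ha0 : a 0 = 0) (ha1 : a 1 = 1)
    (hgs : ∀ w ∈ ball (0 : ℂ) 1, HasSum (fun n : ℕ => A n * w ^ n) (g w))
    (hA0 : A 0 = 0) (hA1 : A 1 = 1)
    (hA2 : A 2 = -a 2) (hA3 : A 3 = 2 * (a 2) ^ 2 - a 3)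
    (hus : ∀ z ∈ ball (0 : ℂ) 1, HasSum (fun n : ℕ => c n * z ^ n) (u z))
    (hc0 : c 0 = 0)
    (hvs : ∀ w ∈ ball (0 : ℂ) 1, HasSum (fun n : ℕ => d n * w ^ n) (v w))
    (hd0 : d 0 = 0)
    (hφs : ∀ z ∈ ball (0 : ℂ) 1, HasSum (fun n : ℕ => (B n : ℂ) * z ^ n) (φf z))
    (hsub1 : ∀ z ∈ ball (0 : ℂ) 1, z ≠ 0 →
      1 + (1 / τ) * ((1 - (lam : ℂ)) * (f z / z) + (lam : ℂ) * deriv f z +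
        (del : ℂ) * z * deriv (deriv f) z - 1) = φf (u z))
    (hsub2 : ∀ w ∈ ball (0 : ℂ) 1, w ≠ 0 →
      1 + (1 / τ) * ((1 - (lam : ℂ)) * (g w / w) + (lam : ℂ) * deriv g w +
        (del : ℂ) * w * deriv (deriv g) w - 1) = φf (v w)) :
    ((1 + 2 * (lam : ℂ) + 6 * (del : ℂ)) / τ) * a 3 = (B 1 : ℂ) * c 2 + (B 2 : ℂ) * (c 1) ^ 2 ∧
    ((1 + 2 * (lam : ℂ) + 6 * (del : ℂ)) / τ) * (2 * (a 2) ^ 2 - a 3) =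
      (B 1 : ℂ) * d 2 + (B 2 : ℂ) * (d 1) ^ 2 ∧
    a 3 = (B 1 : ℂ) ^ 2 * (c 1) ^ 2 * τ ^ 2 / (1 + (lam : ℂ) + 2 * (del : ℂ)) ^ 2 +
      (B 1 : ℂ) * τ * (c 2 - d 2) / (2 * (1 + 2 * (lam : ℂ) + 6 * (del : ℂ))) := by
  have hP : (1 + lam + 2 * del : ℂ) ≠ 0 := by
    exact_mod_cast (by linarith : (0 : ℝ) < 1 + lam + 2 * del).ne'
  have hQ : (1 + 2 * lam + 6 * del : ℂ) ≠ 0 := by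
    exact_mod_cast (by linarith : (0 : ℝ) < 1 + 2 * lam + 6 * del).ne'
  have hb0 : (B 0 : ℂ) = 1 := by simp [hB0]
  obtain ⟨hf2, hf3⟩ := coeff_relations_of_subordinate (r := 1) (s := 1) one_pos one_pos hφs hb0
    hfs ha0 ha1 hus hc0 hsub1
  obtain ⟨hg2, hg3⟩ := coeff_relations_of_subordinate (r := 1) (s := 1) one_pos one_pos hφs hb0
    hgs hA0 hA1 hvs hd0 hsub2
  rw [hA2] at hg2
  rw [hA3] at hg3
  have hB1' : (B 1 : ℂ) ≠ 0 := by exact_mod_cast hB1.ne'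
  have hd1 : d 1 = -c 1 := mul_left_cancel₀ hB1' (by linear_combination -hg2 - hf2)
  exact ⟨hf3, hg3, third_coeff_eq_of_relations hP hQ hτ hf2 hf3 hg3 (by rw [hd1, neg_sq])⟩

/-- In the class `H_Σ(τ,λ,δ;φ)`, comparing third coefficients gives
`((1+2λ+6δ)/τ) a₃ = B₁ c₂ + B₂ c₁²` and `((1+2λ+6δ)/τ)(2a₂² - a₃) = B₁ d₂ + B₂ d₁²`;
subtracting and using the formula for `a₂` yields
`a₃ = B₁² c₁² τ²/(1+λ+2δ)² + B₁ τ (c₂-d₂)/(2(1+2λ+6δ))`. -/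
theorem third_coefficient_relations (f g u v φf : ℂ → ℂ) (a A c d : ℕ → ℂ) (B : ℕ → ℝ) (lam del : ℝ) (τ : ℂ)
    (hlam : 1 ≤ lam) (hdel0 : 0 ≤ del) (hdel1 : del ≤ 1) (hτ : τ ≠ 0)
    (hB0 : B 0 = 1) (hB1 : 0 < B 1)
    (hfd : DifferentiableOn ℂ f (ball (0 : ℂ) 1))
    (hfinj : Set.InjOn f (ball (0 : ℂ) 1))
    (hfs : ∀ z ∈ ball (0 : ℂ) 1, HasSum (fun n : ℕ => a n * z ^ n) (f z))
    (ha0 : a 0 = 0) (ha1 : a 1 = 1)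
    (hgd : DifferentiableOn ℂ g (ball (0 : ℂ) 1))
    (hginj : Set.InjOn g (ball (0 : ℂ) 1))
    (hgs : ∀ w ∈ ball (0 : ℂ) 1, HasSum (fun n : ℕ => A n * w ^ n) (g w))
    (hA0 : A 0 = 0) (hA1 : A 1 = 1)
    (hA2 : A 2 = -a 2) (hA3 : A 3 = 2 * (a 2) ^ 2 - a 3)
    (hA4 : A 4 = -(5 * (a 2) ^ 3 - 5 * a 2 * a 3 + a 4))
    (hud : DifferentiableOn ℂ u (ball (0 : ℂ) 1))
    (hus : ∀ z ∈ ball (0 : ℂ) 1, HasSum (fun n : ℕ => c n * z ^ n) (u z))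
    (hc0 : c 0 = 0) (hubd : ∀ z ∈ ball (0 : ℂ) 1, ‖u z‖ < 1)
    (hvd : DifferentiableOn ℂ v (ball (0 : ℂ) 1))
    (hvs : ∀ w ∈ ball (0 : ℂ) 1, HasSum (fun n : ℕ => d n * w ^ n) (v w))
    (hd0 : d 0 = 0) (hvbd : ∀ w ∈ ball (0 : ℂ) 1, ‖v w‖ < 1)
    (hφs : ∀ z ∈ ball (0 : ℂ) 1, HasSum (fun n : ℕ => (B n : ℂ) * z ^ n) (φf z))
    (hsub1 : ∀ z ∈ ball (0 : ℂ) 1, z ≠ 0 →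
      1 + (1 / τ) * ((1 - (lam : ℂ)) * (f z / z) + (lam : ℂ) * deriv f z +
        (del : ℂ) * z * deriv (deriv f) z - 1) = φf (u z))
    (hsub2 : ∀ w ∈ ball (0 : ℂ) 1, w ≠ 0 →
      1 + (1 / τ) * ((1 - (lam : ℂ)) * (g w / w) + (lam : ℂ) * deriv g w +
        (del : ℂ) * w * deriv (deriv g) w - 1) = φf (v w)) :
    ((1 + 2 * (lam : ℂ) + 6 * (del : ℂ)) / τ) * a 3 = (B 1 : ℂ) * c 2 + (B 2 : ℂ) * (c 1) ^ 2 ∧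
    ((1 + 2 * (lam : ℂ) + 6 * (del : ℂ)) / τ) * (2 * (a 2) ^ 2 - a 3) =
      (B 1 : ℂ) * d 2 + (B 2 : ℂ) * (d 1) ^ 2 ∧
    a 3 = (B 1 : ℂ) ^ 2 * (c 1) ^ 2 * τ ^ 2 / (1 + (lam : ℂ) + 2 * (del : ℂ)) ^ 2 +
      (B 1 : ℂ) * τ * (c 2 - d 2) / (2 * (1 + 2 * (lam : ℂ) + 6 * (del : ℂ))) :=
  third_coefficient_relations_general f g u v φf a A c d B lam del τ hlam hdel0 hτ hB0 hB1 hfs ha0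
    ha1 hgs hA0 hA1 hA2 hA3 hus hc0 hvs hd0 hφs hsub1 hsub2
end

section
/- Under the hypotheses of the class H_Σ(τ,λ,δ;φ), comparing fourth coefficients gives ((1+3λ+12δ)/τ)a₄ = B₁c₃ + 2B₂c₁c₂ + B₃c₁³ and −((1+3λ+12δ)/τ)(5a₂³ − 5a₂a₃ + a₄) = B₁d₃ + 2B₂d₁d₂ + B₃d₁³; combining with the formulas for a₂ and a₃ yields a₄ = 5B₁²c₁τ²(c₂−d₂)/(4(1+λ+2δ)(1+2λ+6δ)) + B₁τ(c₃−d₃)/(2(1+3λ+12δ)) + B₃c₁³τ/(1+3λ+12δ) + B₂c₁τ(c₂+d₂)/(1+3λ+12δ). -/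
/-!
Both sides of each subordination relation are expanded at the origin up to `O(z⁴)`. The left
side is read off termwise from the power series of `f`, `f'` and `f''`. For `φ ∘ u` one uses
that if `φ` agrees with a polynomial `P` up to `O(wⁿ)` and `u` agrees with a polynomial `Q`,
`Q(0) = 0`, up to `O(zⁿ)`, then `φ ∘ u` agrees with `P.comp Q` up to `O(zⁿ)`. A polynomial that
is `O(zⁿ)` on a punctured neighbourhood of `0` is divisible by `Xⁿ`, so the coefficients of `z`,
`z²`, `z³` on both sides agree. This gives the relations for `f`, and, applied to the inverse
`g`, those for `g`; eliminating `a₂`, `a₃` and `d₁ = -c₁` between them yields `a₄`.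
-/

namespace Subordination

open Metric Filter Asymptotics Topology Polynomial Finset FormalMultilinearSeries
open scoped NNReal

section PolynomialApproximation

variable {l : Filter ℂ} {n : ℕ}

lemma isBigO_eval_of_X_pow_dvd {p : ℂ[X]} (hp : X ^ n ∣ p) :
    (fun z => p.eval z) =O[𝓝 0] (· ^ n) := by
  obtain ⟨q, rfl⟩ := hp
  simpa using (isBigO_refl (· ^ n) (𝓝 (0 : ℂ))).mul ((q.continuous.tendsto 0).isBigO_one ℂ)

lemma X_pow_dvd_of_isBigO_eval {p : ℂ[X]} (hp : (fun z => p.eval z) =O[𝓝[≠] 0] (· ^ n)) :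
    X ^ n ∣ p := by
  induction n generalizing p with
  | zero => simp
  | succ n ih =>
    have hcoeff : p.coeff 0 = 0 := by
      have hlim : Tendsto (fun z => p.eval z) (𝓝[≠] 0) (𝓝 0) :=
        hp.trans_tendsto (by simpa using
          ((continuous_pow (n + 1)).tendsto (0 : ℂ)).mono_left nhdsWithin_le_nhds)
      rw [coeff_zero_eq_eval_zero]
      exact tendsto_nhds_unique
        ((p.continuous.tendsto 0).mono_left nhdsWithin_le_nhds) hlim
    have hp' : X * p.divX = p := by simpa [hcoeff] using X_mul_divX_add p
    have hdiv : (fun z => p.divX.eval z) =O[𝓝[≠] 0] (· ^ n) := by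
      refine (hp.mul (isBigO_refl (fun z : ℂ => z⁻¹) _)).congr' ?_ ?_ <;>
        filter_upwards [self_mem_nhdsWithin] with z (hz : z ≠ 0)
      · rw [← congrArg (eval z) hp', eval_mul, eval_X]; field_simp
      · field_simp; ring
    rw [← hp', pow_succ']
    exact mul_dvd_mul_left X (ih hdiv)

lemma isBigO_mul_sub_eval_mul (hl : l ≤ 𝓝 0) {F G : ℂ → ℂ} {p q : ℂ[X]}
    (hF : (fun z => F z - p.eval z) =O[l] (· ^ n))
    (hG : (fun z => G z - q.eval z) =O[l] (· ^ n)) :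
    (fun z => F z * G z - (p * q).eval z) =O[l] (· ^ n) := by
  have hbdd : ∀ r : ℂ[X], (fun z => r.eval z) =O[l] (fun _ => (1 : ℂ)) := fun r =>
    ((r.continuous.tendsto 0).mono_left hl).isBigO_one ℂ
  have hpow : (fun z : ℂ => z ^ n) =O[l] (fun _ => (1 : ℂ)) :=
    (((continuous_pow n).tendsto 0).mono_left hl).isBigO_one ℂ
  have e1 : (fun z => (F z - p.eval z) * (G z - q.eval z)) =O[l] (· ^ n) := by
    simpa using hF.mul (hG.trans hpow)
  have e2 : (fun z => p.eval z * (G z - q.eval z)) =O[l] (· ^ n) := by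
    simpa using (hbdd p).mul hG
  have e3 : (fun z => (F z - p.eval z) * q.eval z) =O[l] (· ^ n) := by
    simpa using hF.mul (hbdd q)
  refine ((e1.add e2).add e3).congr_left fun z => ?_
  simp only [eval_mul]; ring

lemma isBigO_eval_comp_sub_eval_comp (hl : l ≤ 𝓝 0) {u : ℂ → ℂ} {Q : ℂ[X]}
    (hu : (fun z => u z - Q.eval z) =O[l] (· ^ n)) (P : ℂ[X]) :
    (fun z => P.eval (u z) - (P.comp Q).eval z) =O[l] (· ^ n) := by
  induction P using Polynomial.induction_on' with
  | add p q hp hq =>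
    refine (hp.add hq).congr_left fun z => ?_
    simp only [eval_add, add_comp]; ring
  | monomial k a =>
    induction k with
    | zero => simpa using isBigO_zero _ _
    | succ k ih =>
      refine (isBigO_mul_sub_eval_mul hl ih hu).congr_left fun z => ?_
      simp only [← monomial_mul_X, eval_mul, eval_X, mul_comp, X_comp]

lemma isBigO_comp_sub_eval_comp (hl : l ≤ 𝓝 0) (hn : n ≠ 0) {φ u : ℂ → ℂ} {P Q : ℂ[X]}
    (hφ : (fun w => φ w - P.eval w) =O[𝓝 0] (· ^ n))
    (hu : (fun z => u z - Q.eval z) =O[l] (· ^ n)) (hQ : Q.coeff 0 = 0) :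
    (fun z => φ (u z) - (P.comp Q).eval z) =O[l] (· ^ n) := by
  have hpow : (fun z : ℂ => z ^ n) =O[l] (fun z => z) := by
    obtain ⟨m, rfl⟩ := Nat.exists_eq_add_one_of_ne_zero hn
    simpa [pow_succ'] using (isBigO_refl (fun z : ℂ => z) l).mul
      ((((continuous_pow m).tendsto 0).mono_left hl).isBigO_one ℂ)
  have hQz : (fun z => Q.eval z) =O[l] (fun z => z) := by
    simpa using (isBigO_eval_of_X_pow_dvd (n := 1) (by simpa [X_dvd_iff] using hQ)).mono hl
  have huz : u =O[l] (fun z => z) := ((hu.trans hpow).add hQz).congr_left (by simp)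
  have hu0 : Tendsto u l (𝓝 0) := huz.trans_tendsto (tendsto_id'.mpr hl)
  have hφu : (fun z => φ (u z) - P.eval (u z)) =O[l] (· ^ n) :=
    (hφ.comp_tendsto hu0).trans (huz.pow n)
  exact (hφu.add (isBigO_eval_comp_sub_eval_comp hl hu P)).congr_left fun z => by ring

end PolynomialApproximation

section PowerSeries

variable {F : ℂ → ℂ} {a : ℕ → ℂ} {r : ℝ≥0}

lemma hasFPowerSeriesOnBall_ofScalars_of_hasSum (hr : 0 < r)
    (h : ∀ z ∈ ball (0 : ℂ) r, HasSum (fun n => a n * z ^ n) (F z)) :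
    HasFPowerSeriesOnBall F (ofScalars ℂ a) 0 r where
  r_le := by
    refine ENNReal.le_of_forall_nnreal_lt fun s hs => le_radius_of_tendsto _ (l := 0) ?_
    have hs' : ((s : ℝ) : ℂ) ∈ ball (0 : ℂ) r := by
      simpa [abs_of_nonneg s.coe_nonneg] using (show (s : ℝ) < r by exact_mod_cast hs)
    simpa [ofScalars_norm, abs_of_nonneg s.coe_nonneg] using
      (h _ hs').summable.tendsto_atTop_zero.norm
  r_pos := by exact_mod_cast hr
  hasSum {y} hy := by
    simpa [ofScalars_apply_eq, mul_comm] using h y (by rwa [← eball_coe])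

lemma hasSum_deriv_of_hasSum (hr : 0 < r)
    (h : ∀ z ∈ ball (0 : ℂ) r, HasSum (fun n => a n * z ^ n) (F z)) :
    ∀ z ∈ ball (0 : ℂ) r, HasSum (fun n => (n + 1) * a (n + 1) * z ^ n) (deriv F z) := by
  intro z hz
  have hF := (hasFPowerSeriesOnBall_ofScalars_of_hasSum hr h).fderiv.hasSum
    (y := z) (by rwa [eball_coe])
  have := (ContinuousLinearMap.apply ℂ ℂ (1 : ℂ)).hasSum hF
  simp only [ContinuousLinearMap.apply_apply, zero_add, fderiv_apply_one_eq_deriv] at this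
  refine this.congr_fun fun n => ?_
  rw [apply_eq_pow_smul_coeff]
  simp only [_root_.smul_apply, derivSeries_coeff_one, coeff_ofScalars, nsmul_eq_mul,
    Nat.cast_add, Nat.cast_one, smul_eq_mul]
  ring

lemma isBigO_sub_eval_sum_range (hr : 0 < r)
    (h : ∀ z ∈ ball (0 : ℂ) r, HasSum (fun n => a n * z ^ n) (F z)) (n : ℕ) :
    (fun z => F z - (∑ k ∈ range n, C (a k) * X ^ k).eval z) =O[𝓝 0] (· ^ n) := by
  have hF := (hasFPowerSeriesOnBall_ofScalars_of_hasSum hr h).hasFPowerSeriesAt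
  have hnorm : (fun z : ℂ => ‖z‖ ^ n) =O[𝓝 0] (· ^ n) := by
    simpa [norm_pow] using (isBigO_refl (fun z : ℂ => z ^ n) (𝓝 0)).norm_left
  refine ((hF.isBigO_sub_partialSum_pow n).trans hnorm).congr_left fun z => ?_
  simp [partialSum, eval_finsetSum, mul_comm (z ^ _)]

lemma isBigO_nhdsNE_sub_eval_sum_range (hr : 0 < r)
    (h : ∀ z ∈ ball (0 : ℂ) r, z ≠ 0 → HasSum (fun n => a n * z ^ n) (F z)) (n : ℕ) :
    (fun z => F z - (∑ k ∈ range n, C (a k) * X ^ k).eval z) =O[𝓝[≠] 0] (· ^ n) := by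
  have hG : ∀ z ∈ ball (0 : ℂ) r,
      HasSum (fun n => a n * z ^ n) (Function.update F 0 (a 0) z) := by
    intro z hz
    rcases eq_or_ne z 0 with rfl | hz0
    · simpa using hasSum_single (f := fun n => a n * 0 ^ n) 0 fun n hn => by simp [hn]
    · simpa [hz0] using h z hz hz0
  refine ((isBigO_sub_eval_sum_range hr hG n).mono nhdsWithin_le_nhds).congr' ?_ EventuallyEq.rfl
  filter_upwards [self_mem_nhdsWithin] with z (hz : z ≠ 0)
  simp [hz]

lemma hasSum_mixed_deriv {lam del : ℂ} (hr : 0 < r)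
    (h : ∀ z ∈ ball (0 : ℂ) r, HasSum (fun n => a n * z ^ n) (F z)) (ha0 : a 0 = 0) :
    ∀ z ∈ ball (0 : ℂ) r, z ≠ 0 →
      HasSum (fun n => (1 + n * lam + n * (n + 1) * del) * a (n + 1) * z ^ n)
        ((1 - lam) * (F z / z) + lam * deriv F z + del * z * deriv (deriv F) z) := by
  intro z hz hz0
  have hdiv : HasSum (fun n => a (n + 1) * z ^ n) (F z / z) := by
    have := ((hasSum_nat_add_iff' 1).mpr (h z hz)).div_const z
    refine (by simpa [ha0] using this : HasSum _ _).congr_fun fun n => ?_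
    field_simp; ring
  have h1 := hasSum_deriv_of_hasSum hr h z hz
  have h2 : HasSum (fun n => n * (n + 1) * a (n + 1) * z ^ n) (z * deriv (deriv F) z) := by
    refine (hasSum_nat_add_iff' 1).mp ?_
    simpa [pow_succ] using
      ((hasSum_deriv_of_hasSum hr (hasSum_deriv_of_hasSum hr h) z hz).mul_left z).congr_fun
        fun n => by push_cast; ring
  rw [mul_assoc del z]
  exact (((hdiv.mul_left (1 - lam)).add (h1.mul_left lam)).add (h2.mul_left del)).congr_fun
    fun n => by ring

lemma coeff_eq_of_subordination {f u φ : ℂ → ℂ} {a c B : ℕ → ℂ} {lam del τ : ℂ} (hr : 0 < r)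
    (hf : ∀ z ∈ ball (0 : ℂ) r, HasSum (fun n => a n * z ^ n) (f z)) (ha0 : a 0 = 0)
    (hu : ∀ z ∈ ball (0 : ℂ) r, HasSum (fun n => c n * z ^ n) (u z)) (hc0 : c 0 = 0)
    (hφ : ∀ w ∈ ball (0 : ℂ) r, HasSum (fun n => B n * w ^ n) (φ w))
    (hsub : ∀ z ∈ ball (0 : ℂ) r, z ≠ 0 →
      1 + (1 / τ) * ((1 - lam) * (f z / z) + lam * deriv f z +
        del * z * deriv (deriv f) z - 1) = φ (u z))
    {n k : ℕ} (hk0 : k ≠ 0) (hkn : k < n) :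
    (1 + k * lam + k * (k + 1) * del) / τ * a (k + 1) =
      ((∑ i ∈ range n, C (B i) * X ^ i).comp (∑ i ∈ range n, C (c i) * X ^ i)).coeff k := by
  set M := ∑ i ∈ range n, C ((1 + i * lam + i * (i + 1) * del) * a (i + 1)) * X ^ i
  set L := C (1 - 1 / τ) + C (1 / τ) * M
  have hL : (fun z => 1 + (1 / τ) * ((1 - lam) * (f z / z) + lam * deriv f z +
      del * z * deriv (deriv f) z - 1) - L.eval z) =O[𝓝[≠] 0] (· ^ n) :=
    ((isBigO_nhdsNE_sub_eval_sum_range hr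
      (hasSum_mixed_deriv (lam := lam) (del := del) hr hf ha0) n).const_mul_left
      (1 / τ)).congr_left fun z => (by simp only [L, M, eval_add, eval_mul, eval_C]; ring)
  have hR := isBigO_comp_sub_eval_comp (l := 𝓝[≠] 0) nhdsWithin_le_nhds (by omega)
    (isBigO_sub_eval_sum_range hr hφ n) ((isBigO_sub_eval_sum_range hr hu n).mono nhdsWithin_le_nhds)
    (by simp [finsetSum_coeff, coeff_C, hc0])
  have hdvd : X ^ n ∣ L - (∑ i ∈ range n, C (B i) * X ^ i).comp (∑ i ∈ range n, C (c i) * X ^ i) :=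
    X_pow_dvd_of_isBigO_eval <| (hR.sub hL).congr' (by
      filter_upwards [self_mem_nhdsWithin, mem_nhdsWithin_of_mem_nhds (ball_mem_nhds 0
        (NNReal.coe_pos.mpr hr))] with z (hz : z ≠ 0) hzr
      rw [hsub z hzr hz, eval_sub]; ring) EventuallyEq.rfl
  have := X_pow_dvd_iff.mp hdvd k hkn
  simp only [L, M, coeff_sub, coeff_add, coeff_C, coeff_C_mul, finsetSum_coeff, coeff_X_pow,
    if_neg hk0, mul_ite, mul_one, mul_zero, sum_ite_eq, mem_range, if_pos hkn] at this
  linear_combination this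

lemma coeff_relations_of_subordination {f u φ : ℂ → ℂ} {a c B : ℕ → ℂ} {lam del τ : ℂ}
    (hr : 0 < r)
    (hf : ∀ z ∈ ball (0 : ℂ) r, HasSum (fun n => a n * z ^ n) (f z)) (ha0 : a 0 = 0)
    (hu : ∀ z ∈ ball (0 : ℂ) r, HasSum (fun n => c n * z ^ n) (u z)) (hc0 : c 0 = 0)
    (hφ : ∀ w ∈ ball (0 : ℂ) r, HasSum (fun n => B n * w ^ n) (φ w))
    (hsub : ∀ z ∈ ball (0 : ℂ) r, z ≠ 0 →
      1 + (1 / τ) * ((1 - lam) * (f z / z) + lam * deriv f z +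
        del * z * deriv (deriv f) z - 1) = φ (u z)) :
    (1 + lam + 2 * del) / τ * a 2 = B 1 * c 1 ∧
    (1 + 2 * lam + 6 * del) / τ * a 3 = B 1 * c 2 + B 2 * c 1 ^ 2 ∧
    (1 + 3 * lam + 12 * del) / τ * a 4 = B 1 * c 3 + 2 * B 2 * c 1 * c 2 + B 3 * c 1 ^ 3 := by
  have key (k : ℕ) (hk0 : k ≠ 0) (hk : k < 4) :=
    coeff_eq_of_subordination hr hf ha0 hu hc0 hφ hsub hk0 hk
  have h1 := key 1 one_ne_zero (by norm_num)
  have h2 := key 2 two_ne_zero (by norm_num)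
  have h3 := key 3 three_ne_zero (by norm_num)
  simp only [sum_range_succ, sum_range_zero, hc0] at h1 h2 h3
  simp [coeff_mul, Nat.antidiagonal_succ, pow_succ, coeff_X, coeff_C] at h1 h2 h3
  refine ⟨?_, ?_, ?_⟩
  · linear_combination h1
  · linear_combination h2
  · linear_combination h3

end PowerSeries

lemma fourth_coeff_eq {a₂ a₃ a₄ c₁ c₂ c₃ d₁ d₂ d₃ B₁ B₂ B₃ K₁ K₂ K₃ τ : ℂ}
    (hK₁ : K₁ ≠ 0) (hK₂ : K₂ ≠ 0) (hK₃ : K₃ ≠ 0) (hB₁ : B₁ ≠ 0) (hτ : τ ≠ 0)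
    (hc₁ : K₁ / τ * a₂ = B₁ * c₁) (hd₁ : K₁ / τ * -a₂ = B₁ * d₁)
    (hc₂ : K₂ / τ * a₃ = B₁ * c₂ + B₂ * c₁ ^ 2)
    (hd₂ : K₂ / τ * (2 * a₂ ^ 2 - a₃) = B₁ * d₂ + B₂ * d₁ ^ 2)
    (hc₃ : K₃ / τ * a₄ = B₁ * c₃ + 2 * B₂ * c₁ * c₂ + B₃ * c₁ ^ 3)
    (hd₃ : K₃ / τ * -(5 * a₂ ^ 3 - 5 * a₂ * a₃ + a₄) = B₁ * d₃ + 2 * B₂ * d₁ * d₂ + B₃ * d₁ ^ 3) :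
    a₄ = 5 * B₁ ^ 2 * c₁ * τ ^ 2 * (c₂ - d₂) / (4 * K₁ * K₂) + B₁ * τ * (c₃ - d₃) / (2 * K₃) +
      B₃ * c₁ ^ 3 * τ / K₃ + B₂ * c₁ * τ * (c₂ + d₂) / K₃ := by
  have hclear {K x y : ℂ} (h : K / τ * x = y) : K * x = τ * y := by rw [← h]; field_simp
  have hdc : d₁ = -c₁ := mul_left_cancel₀ hB₁ (by linear_combination -hc₁ - hd₁)
  subst hdc
  have key : 4 * K₁ * K₂ * K₃ * a₄ = 5 * B₁ ^ 2 * c₁ * τ ^ 2 * (c₂ - d₂) * K₃ +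
      2 * K₁ * K₂ * τ * (B₁ * (c₃ - d₃) + 2 * B₂ * c₁ * (c₂ + d₂) + 2 * B₃ * c₁ ^ 3) := by
    linear_combination (2 * K₁ * K₂) * (hclear hc₃ - hclear hd₃) +
      (5 * K₁ * K₃ * a₂) * (hclear hc₂ - hclear hd₂) + (5 * K₃ * τ * B₁ * (c₂ - d₂)) * hclear hc₁
  refine mul_left_cancel₀ (by simp [hK₁, hK₂, hK₃] : 4 * K₁ * K₂ * K₃ ≠ 0) ?_
  rw [key]
  field_simp
  ring

end Subordination

open Metric

theorem fourth_coefficient_relations_general (f g u v φf : ℂ → ℂ) (a A c d : ℕ → ℂ) (B : ℕ → ℝ) (lam del : ℝ) (τ : ℂ)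
    (hlam : 1 ≤ lam) (hdel0 : 0 ≤ del) (hτ : τ ≠ 0)
    (hB1 : 0 < B 1)
    (hfs : ∀ z ∈ ball (0 : ℂ) 1, HasSum (fun n : ℕ => a n * z ^ n) (f z))
    (ha0 : a 0 = 0)
    (hgs : ∀ w ∈ ball (0 : ℂ) 1, HasSum (fun n : ℕ => A n * w ^ n) (g w))
    (hA0 : A 0 = 0)
    (hA2 : A 2 = -a 2) (hA3 : A 3 = 2 * (a 2) ^ 2 - a 3)
    (hA4 : A 4 = -(5 * (a 2) ^ 3 - 5 * a 2 * a 3 + a 4))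
    (hus : ∀ z ∈ ball (0 : ℂ) 1, HasSum (fun n : ℕ => c n * z ^ n) (u z))
    (hc0 : c 0 = 0)
    (hvs : ∀ w ∈ ball (0 : ℂ) 1, HasSum (fun n : ℕ => d n * w ^ n) (v w))
    (hd0 : d 0 = 0)
    (hφs : ∀ z ∈ ball (0 : ℂ) 1, HasSum (fun n : ℕ => (B n : ℂ) * z ^ n) (φf z))
    (hsub1 : ∀ z ∈ ball (0 : ℂ) 1, z ≠ 0 →
      1 + (1 / τ) * ((1 - (lam : ℂ)) * (f z / z) + (lam : ℂ) * deriv f z +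
        (del : ℂ) * z * deriv (deriv f) z - 1) = φf (u z))
    (hsub2 : ∀ w ∈ ball (0 : ℂ) 1, w ≠ 0 →
      1 + (1 / τ) * ((1 - (lam : ℂ)) * (g w / w) + (lam : ℂ) * deriv g w +
        (del : ℂ) * w * deriv (deriv g) w - 1) = φf (v w)) :
    ((1 + 3 * (lam : ℂ) + 12 * (del : ℂ)) / τ) * a 4 =
      (B 1 : ℂ) * c 3 + 2 * (B 2 : ℂ) * c 1 * c 2 + (B 3 : ℂ) * (c 1) ^ 3 ∧
    -((1 + 3 * (lam : ℂ) + 12 * (del : ℂ)) / τ) * (5 * (a 2) ^ 3 - 5 * a 2 * a 3 + a 4) =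
      (B 1 : ℂ) * d 3 + 2 * (B 2 : ℂ) * d 1 * d 2 + (B 3 : ℂ) * (d 1) ^ 3 ∧
    a 4 = 5 * (B 1 : ℂ) ^ 2 * c 1 * τ ^ 2 * (c 2 - d 2) /
        (4 * (1 + (lam : ℂ) + 2 * (del : ℂ)) * (1 + 2 * (lam : ℂ) + 6 * (del : ℂ))) +
      (B 1 : ℂ) * τ * (c 3 - d 3) / (2 * (1 + 3 * (lam : ℂ) + 12 * (del : ℂ))) +
      (B 3 : ℂ) * (c 1) ^ 3 * τ / (1 + 3 * (lam : ℂ) + 12 * (del : ℂ)) +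
      (B 2 : ℂ) * c 1 * τ * (c 2 + d 2) / (1 + 3 * (lam : ℂ) + 12 * (del : ℂ)) := by
  obtain ⟨hc₁, hc₂, hc₃⟩ :=
    Subordination.coeff_relations_of_subordination one_pos hfs ha0 hus hc0 hφs hsub1
  obtain ⟨hd₁, hd₂, hd₃⟩ :=
    Subordination.coeff_relations_of_subordination one_pos hgs hA0 hvs hd0 hφs hsub2
  rw [hA2] at hd₁
  rw [hA3] at hd₂
  rw [hA4] at hd₃
  have hK₁ : (1 + lam + 2 * del : ℂ) ≠ 0 := by
    exact_mod_cast (show (0 : ℝ) < 1 + lam + 2 * del by linarith).ne'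
  have hK₂ : (1 + 2 * lam + 6 * del : ℂ) ≠ 0 := by
    exact_mod_cast (show (0 : ℝ) < 1 + 2 * lam + 6 * del by linarith).ne'
  have hK₃ : (1 + 3 * lam + 12 * del : ℂ) ≠ 0 := by
    exact_mod_cast (show (0 : ℝ) < 1 + 3 * lam + 12 * del by linarith).ne'
  refine ⟨hc₃, by linear_combination hd₃, ?_⟩
  exact Subordination.fourth_coeff_eq hK₁ hK₂ hK₃ (by exact_mod_cast hB1.ne') hτ
    hc₁ hd₁ hc₂ hd₂ hc₃ hd₃

/-- In the class `H_Σ(τ,λ,δ;φ)`, comparing fourth coefficients gives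
`((1+3λ+12δ)/τ) a₄ = B₁ c₃ + 2B₂ c₁ c₂ + B₃ c₁³` and
`-((1+3λ+12δ)/τ)(5a₂³ - 5a₂a₃ + a₄) = B₁ d₃ + 2B₂ d₁ d₂ + B₃ d₁³`; combining with the
formulas for `a₂` and `a₃` yields the stated formula for `a₄`. -/
theorem fourth_coefficient_relations (f g u v φf : ℂ → ℂ) (a A c d : ℕ → ℂ) (B : ℕ → ℝ) (lam del : ℝ) (τ : ℂ)
    (hlam : 1 ≤ lam) (hdel0 : 0 ≤ del) (hdel1 : del ≤ 1) (hτ : τ ≠ 0)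
    (hB0 : B 0 = 1) (hB1 : 0 < B 1)
    (hfd : DifferentiableOn ℂ f (ball (0 : ℂ) 1))
    (hfinj : Set.InjOn f (ball (0 : ℂ) 1))
    (hfs : ∀ z ∈ ball (0 : ℂ) 1, HasSum (fun n : ℕ => a n * z ^ n) (f z))
    (ha0 : a 0 = 0) (ha1 : a 1 = 1)
    (hgd : DifferentiableOn ℂ g (ball (0 : ℂ) 1))
    (hginj : Set.InjOn g (ball (0 : ℂ) 1))
    (hgs : ∀ w ∈ ball (0 : ℂ) 1, HasSum (fun n : ℕ => A n * w ^ n) (g w))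
    (hA0 : A 0 = 0) (hA1 : A 1 = 1)
    (hA2 : A 2 = -a 2) (hA3 : A 3 = 2 * (a 2) ^ 2 - a 3)
    (hA4 : A 4 = -(5 * (a 2) ^ 3 - 5 * a 2 * a 3 + a 4))
    (hud : DifferentiableOn ℂ u (ball (0 : ℂ) 1))
    (hus : ∀ z ∈ ball (0 : ℂ) 1, HasSum (fun n : ℕ => c n * z ^ n) (u z))
    (hc0 : c 0 = 0) (hubd : ∀ z ∈ ball (0 : ℂ) 1, ‖u z‖ < 1)
    (hvd : DifferentiableOn ℂ v (ball (0 : ℂ) 1))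
    (hvs : ∀ w ∈ ball (0 : ℂ) 1, HasSum (fun n : ℕ => d n * w ^ n) (v w))
    (hd0 : d 0 = 0) (hvbd : ∀ w ∈ ball (0 : ℂ) 1, ‖v w‖ < 1)
    (hφs : ∀ z ∈ ball (0 : ℂ) 1, HasSum (fun n : ℕ => (B n : ℂ) * z ^ n) (φf z))
    (hsub1 : ∀ z ∈ ball (0 : ℂ) 1, z ≠ 0 →
      1 + (1 / τ) * ((1 - (lam : ℂ)) * (f z / z) + (lam : ℂ) * deriv f z +
        (del : ℂ) * z * deriv (deriv f) z - 1) = φf (u z))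
    (hsub2 : ∀ w ∈ ball (0 : ℂ) 1, w ≠ 0 →
      1 + (1 / τ) * ((1 - (lam : ℂ)) * (g w / w) + (lam : ℂ) * deriv g w +
        (del : ℂ) * w * deriv (deriv g) w - 1) = φf (v w)) :
    ((1 + 3 * (lam : ℂ) + 12 * (del : ℂ)) / τ) * a 4 =
      (B 1 : ℂ) * c 3 + 2 * (B 2 : ℂ) * c 1 * c 2 + (B 3 : ℂ) * (c 1) ^ 3 ∧
    -((1 + 3 * (lam : ℂ) + 12 * (del : ℂ)) / τ) * (5 * (a 2) ^ 3 - 5 * a 2 * a 3 + a 4) =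
      (B 1 : ℂ) * d 3 + 2 * (B 2 : ℂ) * d 1 * d 2 + (B 3 : ℂ) * (d 1) ^ 3 ∧
    a 4 = 5 * (B 1 : ℂ) ^ 2 * c 1 * τ ^ 2 * (c 2 - d 2) /
        (4 * (1 + (lam : ℂ) + 2 * (del : ℂ)) * (1 + 2 * (lam : ℂ) + 6 * (del : ℂ))) +
      (B 1 : ℂ) * τ * (c 3 - d 3) / (2 * (1 + 3 * (lam : ℂ) + 12 * (del : ℂ))) +
      (B 3 : ℂ) * (c 1) ^ 3 * τ / (1 + 3 * (lam : ℂ) + 12 * (del : ℂ)) +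
      (B 2 : ℂ) * c 1 * τ * (c 2 + d 2) / (1 + 3 * (lam : ℂ) + 12 * (del : ℂ)) :=
  fourth_coefficient_relations_general f g u v φf a A c d B lam del τ hlam hdel0 hτ hB1 hfs ha0 hgs
    hA0 hA2 hA3 hA4 hus hc0 hvs hd0 hφs hsub1 hsub2
end

section
/- Let f ∈ N_σ^α, i.e. f is bi-univalent with Re-type condition f'(z) ≺ ((1+z)/(1−z))^α and similarly for the inverse, 0 < α ≤ 1. Then |a₂a₄ − a₃²| ≤ 2α(|(4α³ − α)/12| + 25α/18 + 4α²/3). -/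
/-!
Write `f' = P ∘ u` with `P w = ((1 + w) / (1 - w)) ^ α` and `u` a Schwarz function. By Faà di
Bruno, `2 a₂`, `6 a₃`, `24 a₄` are polynomials in the derivatives of `P` and of `u` at `0`. The
derivatives `2α`, `4α²`, `4α(2α² + 1)` of `P` come from differentiating the linear ODE
`P'(w) (1 - w²) = 2α P(w)` at `0`, and Cauchy's estimate gives `‖u⁽ⁿ⁾(0)‖ ≤ n!`. Hence
`|a₂| ≤ α`, `|a₃| ≤ 2α(1 + α)/3`, `|a₄| ≤ α(1 + α)(2 + α)/3`, and the triangle inequality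
`|a₂a₄ - a₃²| ≤ |a₂||a₄| + |a₃|²` finishes the proof for `0 < α ≤ 1`.
-/

open Complex Metric Filter Nat FormalMultilinearSeries
open scoped Topology NNReal

theorem one_sub_ne_zero_of_norm_lt_one {R : Type*} [SeminormedRing R] [NormOneClass R] {z : R}
    (hz : ‖z‖ < 1) : 1 - z ≠ 0 := by
  intro h
  rw [← sub_eq_zero.mp h, norm_one] at hz
  exact lt_irrefl _ hz

theorem norm_iteratedDeriv_le_of_forall_mem_ball_norm_le {u : ℂ → ℂ} {c : ℂ} {R M : ℝ}
    (n : ℕ) (hR : 0 < R) (hu : DifferentiableOn ℂ u (ball c R))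
    (hM : ∀ z ∈ ball c R, ‖u z‖ ≤ M) :
    ‖iteratedDeriv n u c‖ ≤ n ! * M / R ^ n := by
  have hlt : ∀ r ∈ Set.Ioo 0 R, ‖iteratedDeriv n u c‖ ≤ n ! * M / r ^ n := fun r hr ↦
    norm_iteratedDeriv_le_of_forall_mem_sphere_norm_le n hr.1
      (hu.diffContOnCl_ball (closedBall_subset_ball hr.2))
      fun z hz ↦ hM z (sphere_subset_ball hr.2 hz)
  have hlim : Tendsto (fun r : ℝ ↦ n ! * M / r ^ n) (𝓝[<] R) (𝓝 (n ! * M / R ^ n)) :=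
    ((continuousAt_const.div (continuous_pow n).continuousAt (by positivity)).tendsto).mono_left
      nhdsWithin_le_nhds
  refine ge_of_tendsto hlim ?_
  filter_upwards [Ioo_mem_nhdsLT hR] with r hr using hlt r hr

theorem hasFPowerSeriesOnBall_ofScalars_of_hasSum_s16 {f : ℂ → ℂ} {a : ℕ → ℂ} {R : ℝ≥0}
    (hR : 0 < R) (hf : ∀ z ∈ ball (0 : ℂ) R, HasSum (fun n ↦ a n * z ^ n) (f z)) :
    HasFPowerSeriesOnBall f (ofScalars ℂ a) 0 R where
  r_le := by
    refine ENNReal.le_of_forall_nnreal_lt fun r hr ↦ ?_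
    have hr' : (r : ℂ) ∈ ball (0 : ℂ) R := by
      simpa [abs_of_nonneg r.2] using (by exact_mod_cast hr : (r : ℝ) < R)
    refine (ofScalars ℂ a).le_radius_of_tendsto (l := 0) ?_
    simpa [ofScalars_norm] using (hf _ hr').summable.tendsto_atTop_zero.norm
  r_pos := by simpa using hR
  hasSum := fun {y} hy ↦ by
    have hy' : y ∈ ball (0 : ℂ) R := by simpa using hy
    simpa [ofScalars_apply_eq, mul_comm] using hf y hy'

theorem iteratedDeriv_eq_factorial_mul_of_hasSum_s16 {f : ℂ → ℂ} {a : ℕ → ℂ} {R : ℝ}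
    (hR : 0 < R) (hf : ∀ z ∈ ball (0 : ℂ) R, HasSum (fun n ↦ a n * z ^ n) (f z)) (n : ℕ) :
    iteratedDeriv n f 0 = n ! * a n := by
  lift R to ℝ≥0 using hR.le
  have h := (hasFPowerSeriesOnBall_ofScalars_of_hasSum_s16 (by exact_mod_cast hR) hf).factorial_smul 1 n
  rw [iteratedDeriv_eq_iteratedFDeriv, ← h, ofScalars_apply_eq]
  simp

theorem one_add_div_one_sub_re_pos {w : ℂ} (hw : ‖w‖ < 1) : 0 < ((1 + w) / (1 - w)).re := by
  have hnum : (1 + w).re * (1 - w).re + (1 + w).im * (1 - w).im = 1 - ‖w‖ ^ 2 := by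
    rw [← normSq_eq_norm_sq, normSq_apply]
    simp only [add_re, one_re, sub_re, add_im, one_im, sub_im]
    ring
  rw [div_re, ← add_div, hnum]
  exact div_pos (by nlinarith [norm_nonneg w]) (normSq_pos.mpr (one_sub_ne_zero_of_norm_lt_one hw))

noncomputable def cayleyPow (α w : ℂ) : ℂ := ((1 + w) / (1 - w)) ^ α

section CayleyPow

variable (α : ℂ) {w : ℂ}

theorem hasDerivAt_cayleyPow (hw : ‖w‖ < 1) :
    HasDerivAt (cayleyPow α) (2 * α * cayleyPow α w / (1 - w ^ 2)) w := by
  have hw1 : 1 - w ≠ 0 := one_sub_ne_zero_of_norm_lt_one hw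
  have hw2 : 1 + w ≠ 0 := by simpa using one_sub_ne_zero_of_norm_lt_one (z := -w) (by simpa)
  have hq : HasDerivAt (fun y ↦ (1 + y) / (1 - y)) (2 / (1 - w) ^ 2) w :=
    (((hasDerivAt_id' w).const_add 1).div ((hasDerivAt_id' w).const_sub 1) hw1).congr_deriv
      (by ring)
  refine (hq.cpow_const (mem_slitPlane_iff.mpr (.inl (one_add_div_one_sub_re_pos hw)))).congr_deriv
    ?_
  unfold cayleyPow
  rw [cpow_sub _ _ (div_ne_zero hw2 hw1), cpow_one,
    show (1 : ℂ) - w ^ 2 = (1 - w) * (1 + w) by ring]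
  field_simp

theorem differentiableOn_cayleyPow : DifferentiableOn ℂ (cayleyPow α) (ball 0 1) := fun _ hw ↦
  (hasDerivAt_cayleyPow α (mem_ball_zero_iff.mp hw)).differentiableAt.differentiableWithinAt

theorem analyticAt_cayleyPow (hw : ‖w‖ < 1) : AnalyticAt ℂ (cayleyPow α) w :=
  (differentiableOn_cayleyPow α).analyticOnNhd isOpen_ball w (mem_ball_zero_iff.mpr hw)

theorem deriv_cayleyPow_mul_one_sub_sq (hw : ‖w‖ < 1) :
    deriv (cayleyPow α) w * (1 - w ^ 2) = 2 * α * cayleyPow α w := by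
  have hw2 : 1 - w ^ 2 ≠ 0 := one_sub_ne_zero_of_norm_lt_one <| by
    rw [norm_pow]
    exact pow_lt_one₀ (norm_nonneg w) hw two_ne_zero
  rw [(hasDerivAt_cayleyPow α hw).deriv]
  field_simp

theorem iteratedDeriv_deriv_cayleyPow_mul_one_sub_sq (k : ℕ) :
    iteratedDeriv k (fun w ↦ deriv (cayleyPow α) w * (1 - w ^ 2)) 0 =
      2 * α * iteratedDeriv k (cayleyPow α) 0 := by
  have h : (fun w ↦ deriv (cayleyPow α) w * (1 - w ^ 2)) =ᶠ[𝓝 0]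
      fun w ↦ 2 * α * cayleyPow α w := by
    filter_upwards [ball_mem_nhds (0 : ℂ) one_pos] with w hw
    exact deriv_cayleyPow_mul_one_sub_sq α (mem_ball_zero_iff.mp hw)
  rw [h.iteratedDeriv_eq, iteratedDeriv_const_mul_field]

theorem deriv_cayleyPow_zero : deriv (cayleyPow α) 0 = 2 * α := by
  simpa [cayleyPow] using iteratedDeriv_deriv_cayleyPow_mul_one_sub_sq α 0

theorem iteratedDeriv_two_cayleyPow_zero : iteratedDeriv 2 (cayleyPow α) 0 = 4 * α ^ 2 := by
  have h := iteratedDeriv_deriv_cayleyPow_mul_one_sub_sq α 1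
  rw [iteratedDeriv_fun_mul (analyticAt_cayleyPow α (by simp)).deriv.contDiffAt (by fun_prop)] at h
  simp [Finset.sum_range_succ, iteratedDeriv_const_sub, deriv_cayleyPow_zero] at h
  rw [iteratedDeriv_succ', iteratedDeriv_one, h]
  ring

theorem iteratedDeriv_three_cayleyPow_zero :
    iteratedDeriv 3 (cayleyPow α) 0 = 4 * α * (2 * α ^ 2 + 1) := by
  have h := iteratedDeriv_deriv_cayleyPow_mul_one_sub_sq α 2
  rw [iteratedDeriv_fun_mul (analyticAt_cayleyPow α (by simp)).deriv.contDiffAt (by fun_prop)] at h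
  simp [Finset.sum_range_succ, iteratedDeriv_const_sub, deriv_cayleyPow_zero,
    iteratedDeriv_two_cayleyPow_zero] at h
  rw [iteratedDeriv_succ']
  linear_combination h

end CayleyPow

section Coefficients

variable {α : ℂ} {f u : ℂ → ℂ} {a : ℕ → ℂ}

theorem iteratedDeriv_succ_eq_cayleyPow_comp
    (heq : ∀ z ∈ ball (0 : ℂ) 1, deriv f z = cayleyPow α (u z)) (k : ℕ) :
    iteratedDeriv (k + 1) f 0 = iteratedDeriv k (cayleyPow α ∘ u) 0 := by
  rw [iteratedDeriv_succ']
  refine Filter.EventuallyEq.iteratedDeriv_eq k ?_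
  filter_upwards [ball_mem_nhds (0 : ℂ) one_pos] with z hz using heq z hz

variable (hfs : ∀ z ∈ ball (0 : ℂ) 1, HasSum (fun n ↦ a n * z ^ n) (f z))
  (hu : AnalyticAt ℂ u 0) (hu0 : u 0 = 0)
  (heq : ∀ z ∈ ball (0 : ℂ) 1, deriv f z = cayleyPow α (u z))
include hfs hu hu0 heq

theorem coeff_two_eq_of_cayleyPow_comp : a 2 = α * deriv u 0 := by
  have h := iteratedDeriv_succ_eq_cayleyPow_comp heq 1
  rw [iteratedDeriv_eq_factorial_mul_of_hasSum_s16 one_pos hfs, iteratedDeriv_one,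
    deriv_comp 0 (analyticAt_cayleyPow α (by simp [hu0])).differentiableAt hu.differentiableAt,
    hu0, deriv_cayleyPow_zero] at h
  norm_num [Nat.factorial] at h
  linear_combination h / 2

theorem coeff_three_eq_of_cayleyPow_comp :
    3 * a 3 = 2 * α ^ 2 * deriv u 0 ^ 2 + α * iteratedDeriv 2 u 0 := by
  have h := iteratedDeriv_succ_eq_cayleyPow_comp heq 2
  rw [iteratedDeriv_eq_factorial_mul_of_hasSum_s16 one_pos hfs,
    iteratedDeriv_comp_two (analyticAt_cayleyPow α (by simp [hu0])).contDiffAt hu.contDiffAt, hu0,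
    iteratedDeriv_two_cayleyPow_zero, deriv_cayleyPow_zero] at h
  norm_num [Nat.factorial] at h
  linear_combination h / 2

theorem coeff_four_eq_of_cayleyPow_comp :
    12 * a 4 = 2 * α * (2 * α ^ 2 + 1) * deriv u 0 ^ 3
      + 6 * α ^ 2 * iteratedDeriv 2 u 0 * deriv u 0 + α * iteratedDeriv 3 u 0 := by
  have h := iteratedDeriv_succ_eq_cayleyPow_comp heq 3
  rw [iteratedDeriv_eq_factorial_mul_of_hasSum_s16 one_pos hfs,
    iteratedDeriv_comp_three (analyticAt_cayleyPow α (by simp [hu0])).contDiffAt hu.contDiffAt,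
    hu0, iteratedDeriv_three_cayleyPow_zero, iteratedDeriv_two_cayleyPow_zero,
    deriv_cayleyPow_zero] at h
  norm_num [Nat.factorial] at h
  linear_combination h / 2

end Coefficients

theorem norm_iteratedDeriv_zero_le_factorial {u : ℂ → ℂ} (hu : DifferentiableOn ℂ u (ball 0 1))
    (hu1 : ∀ z ∈ ball (0 : ℂ) 1, ‖u z‖ ≤ 1) (n : ℕ) : ‖iteratedDeriv n u 0‖ ≤ n ! := by
  simpa using norm_iteratedDeriv_le_of_forall_mem_ball_norm_le n one_pos hu hu1

section Bounds

variable {α : ℝ} {f u : ℂ → ℂ} {a : ℕ → ℂ} (hα : 0 ≤ α)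
  (hfs : ∀ z ∈ ball (0 : ℂ) 1, HasSum (fun n ↦ a n * z ^ n) (f z))
  (hu : DifferentiableOn ℂ u (ball 0 1)) (hu0 : u 0 = 0) (hu1 : ∀ z ∈ ball (0 : ℂ) 1, ‖u z‖ ≤ 1)
  (heq : ∀ z ∈ ball (0 : ℂ) 1, deriv f z = cayleyPow α (u z))
include hα hfs hu hu0 hu1 heq

theorem norm_coeff_two_le : ‖a 2‖ ≤ α := by
  have hu' := hu.analyticOnNhd isOpen_ball 0 (mem_ball_self one_pos)
  have h1 : ‖deriv u 0‖ ≤ 1 := by simpa using norm_iteratedDeriv_zero_le_factorial hu hu1 1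
  rw [coeff_two_eq_of_cayleyPow_comp hfs hu' hu0 heq, norm_mul, norm_real, Real.norm_of_nonneg hα]
  exact mul_le_of_le_one_right hα h1

theorem norm_coeff_three_le : ‖a 3‖ ≤ 2 * α * (1 + α) / 3 := by
  have hu' := hu.analyticOnNhd isOpen_ball 0 (mem_ball_self one_pos)
  have h1 : ‖deriv u 0‖ ≤ 1 := by simpa using norm_iteratedDeriv_zero_le_factorial hu hu1 1
  have h2 : ‖iteratedDeriv 2 u 0‖ ≤ 2 := by
    simpa using norm_iteratedDeriv_zero_le_factorial hu hu1 2
  have h := congrArg norm (coeff_three_eq_of_cayleyPow_comp hfs hu' hu0 heq)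
  have : 3 * ‖a 3‖ ≤ 2 * α ^ 2 * 1 ^ 2 + α * 2 := calc
    3 * ‖a 3‖ = ‖2 * (α : ℂ) ^ 2 * deriv u 0 ^ 2 + α * iteratedDeriv 2 u 0‖ := by simpa using h
    _ ≤ 2 * α ^ 2 * ‖deriv u 0‖ ^ 2 + α * ‖iteratedDeriv 2 u 0‖ := by
      refine (norm_add_le _ _).trans_eq ?_
      simp [abs_of_nonneg hα]
    _ ≤ 2 * α ^ 2 * 1 ^ 2 + α * 2 := by gcongr
  linarith

theorem norm_coeff_four_le : ‖a 4‖ ≤ α * (1 + α) * (2 + α) / 3 := by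
  have hu' := hu.analyticOnNhd isOpen_ball 0 (mem_ball_self one_pos)
  have h1 : ‖deriv u 0‖ ≤ 1 := by simpa using norm_iteratedDeriv_zero_le_factorial hu hu1 1
  have h2 : ‖iteratedDeriv 2 u 0‖ ≤ 2 := by
    simpa using norm_iteratedDeriv_zero_le_factorial hu hu1 2
  have h3 : ‖iteratedDeriv 3 u 0‖ ≤ 6 := by
    simpa [Nat.factorial] using norm_iteratedDeriv_zero_le_factorial hu hu1 3
  have hB : ‖2 * (α : ℂ) ^ 2 + 1‖ = 2 * α ^ 2 + 1 := by
    have := norm_real (2 * α ^ 2 + 1)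
    push_cast at this
    rw [this, Real.norm_of_nonneg (by positivity)]
  have h := congrArg norm (coeff_four_eq_of_cayleyPow_comp hfs hu' hu0 heq)
  have : 12 * ‖a 4‖ ≤ 2 * α * (2 * α ^ 2 + 1) * 1 ^ 3 + 6 * α ^ 2 * 2 * 1 + α * 6 := calc
    12 * ‖a 4‖ = ‖2 * (α : ℂ) * (2 * α ^ 2 + 1) * deriv u 0 ^ 3
        + 6 * α ^ 2 * iteratedDeriv 2 u 0 * deriv u 0 + α * iteratedDeriv 3 u 0‖ := by
      simpa using h
    _ ≤ 2 * α * (2 * α ^ 2 + 1) * ‖deriv u 0‖ ^ 3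
        + 6 * α ^ 2 * ‖iteratedDeriv 2 u 0‖ * ‖deriv u 0‖ + α * ‖iteratedDeriv 3 u 0‖ := by
      refine (norm_add₃_le ..).trans_eq ?_
      simp [abs_of_nonneg hα, hB]
    _ ≤ 2 * α * (2 * α ^ 2 + 1) * 1 ^ 3 + 6 * α ^ 2 * 2 * 1 + α * 6 := by gcongr
  linarith

end Bounds

theorem norm_hankel_le_of_coeff_bounds {α : ℝ} (hα0 : 0 ≤ α) (hα1 : α ≤ 1) {a₂ a₃ a₄ : ℂ}
    (h₂ : ‖a₂‖ ≤ α) (h₃ : ‖a₃‖ ≤ 2 * α * (1 + α) / 3) (h₄ : ‖a₄‖ ≤ α * (1 + α) * (2 + α) / 3) :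
    ‖a₂ * a₄ - a₃ ^ 2‖ ≤ 2 * α * (|(4 * α ^ 3 - α) / 12| + 25 * α / 18 + 4 * α ^ 2 / 3) :=
  calc ‖a₂ * a₄ - a₃ ^ 2‖ ≤ ‖a₂‖ * ‖a₄‖ + ‖a₃‖ ^ 2 :=
        (norm_sub_le _ _).trans_eq (by rw [norm_mul, norm_pow])
    _ ≤ α * (α * (1 + α) * (2 + α) / 3) + (2 * α * (1 + α) / 3) ^ 2 := by gcongr
    _ ≤ 2 * α * (|(4 * α ^ 3 - α) / 12| + 25 * α / 18 + 4 * α ^ 2 / 3) := by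
      nlinarith [neg_le_abs ((4 * α ^ 3 - α) / 12), mul_nonneg hα0 hα0,
        mul_nonneg (mul_nonneg hα0 hα0) (sub_nonneg.mpr hα1)]

theorem hankel_bound_N_alpha_general (α : ℝ) (hα0 : 0 < α) (hα1 : α ≤ 1)
    (f : ℂ → ℂ) (a : ℕ → ℂ)
    (hfs : ∀ z ∈ Metric.ball (0 : ℂ) 1, HasSum (fun n : ℕ => a n * z ^ n) (f z))
    (hsub1 : ∃ u : ℂ → ℂ, DifferentiableOn ℂ u (Metric.ball (0 : ℂ) 1) ∧ u 0 = 0 ∧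
      (∀ z ∈ Metric.ball (0 : ℂ) 1, ‖u z‖ < 1) ∧
      ∀ z ∈ Metric.ball (0 : ℂ) 1, deriv f z = ((1 + u z) / (1 - u z)) ^ (α : ℂ)) :
    ‖a 2 * a 4 - (a 3) ^ 2‖ ≤
      2 * α * (|(4 * α ^ 3 - α) / 12| + 25 * α / 18 + 4 * α ^ 2 / 3) := by
  obtain ⟨u, hu, hu0, hu1, heq⟩ := hsub1
  replace hu1 : ∀ z ∈ ball (0 : ℂ) 1, ‖u z‖ ≤ 1 := fun z hz ↦ (hu1 z hz).le
  exact norm_hankel_le_of_coeff_bounds hα0.le hα1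
    (norm_coeff_two_le hα0.le hfs hu hu0 hu1 heq)
    (norm_coeff_three_le hα0.le hfs hu hu0 hu1 heq)
    (norm_coeff_four_le hα0.le hfs hu hu0 hu1 heq)

/-- Corrected bound for the class `N_σ^α` (`Çağlar et al.`, Theorem 1): if `f` is
bi-univalent with `f' ≺ ((1+z)/(1-z))^α` and likewise for the inverse `g`, `0 < α ≤ 1`,
then `|a₂a₄ - a₃²| ≤ 2α(|(4α³-α)/12| + 25α/18 + 4α²/3)`. -/
theorem hankel_bound_N_alpha (α : ℝ) (hα0 : 0 < α) (hα1 : α ≤ 1)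
    (f g : ℂ → ℂ) (a : ℕ → ℂ)
    (hfd : DifferentiableOn ℂ f (Metric.ball (0 : ℂ) 1))
    (hfinj : Set.InjOn f (Metric.ball (0 : ℂ) 1))
    (hfs : ∀ z ∈ Metric.ball (0 : ℂ) 1, HasSum (fun n : ℕ => a n * z ^ n) (f z))
    (ha0 : a 0 = 0) (ha1 : a 1 = 1)
    (hgd : DifferentiableOn ℂ g (Metric.ball (0 : ℂ) 1))
    (hginj : Set.InjOn g (Metric.ball (0 : ℂ) 1))
    (hinv : ∃ r > (0 : ℝ), ∀ z ∈ Metric.ball (0 : ℂ) r, g (f z) = z)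
    (hsub1 : ∃ u : ℂ → ℂ, DifferentiableOn ℂ u (Metric.ball (0 : ℂ) 1) ∧ u 0 = 0 ∧
      (∀ z ∈ Metric.ball (0 : ℂ) 1, ‖u z‖ < 1) ∧
      ∀ z ∈ Metric.ball (0 : ℂ) 1, deriv f z = ((1 + u z) / (1 - u z)) ^ (α : ℂ))
    (hsub2 : ∃ v : ℂ → ℂ, DifferentiableOn ℂ v (Metric.ball (0 : ℂ) 1) ∧ v 0 = 0 ∧
      (∀ w ∈ Metric.ball (0 : ℂ) 1, ‖v w‖ < 1) ∧
      ∀ w ∈ Metric.ball (0 : ℂ) 1, deriv g w = ((1 + v w) / (1 - v w)) ^ (α : ℂ)) :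
    ‖a 2 * a 4 - (a 3) ^ 2‖ ≤
      2 * α * (|(4 * α ^ 3 - α) / 12| + 25 * α / 18 + 4 * α ^ 2 / 3) :=
  hankel_bound_N_alpha_general α hα0 hα1 f a hfs hsub1
end
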